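/- arXiv:1811.01077 — 2 statements merged into one kernel-verified Lean document; each statement's English description precedes it below -/
import Mathlib

section
/- Fix a real b ≥ 0, prices p_H ≥ p_L ≥ 0, a positive integer T, an index t ∈ {1, …, T−1}, and probabilities v_1, …, v_T ∈ [0,1] with v_t < v_{t+1}. Let v' be obtained from v by exchanging v_t and v_{t+1}. Then the expected revenue of the randomized two-price calendar with probabilities v' is at least the expected revenue of the randomized two-price calendar with probabilities v. -/
/-!
Conditioning on the two price indicators `A_t, A_{t+1}` writes the expected revenue as the
bilinear expression `Σ_{a,c} P(A_t = a) P(A_{t+1} = c) R_{ac}`, where `R_{ac}` does not depend on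
`v_t` or `v_{t+1}`. Exchanging `v_t` and `v_{t+1}` therefore changes the expected revenue by
`(v_{t+1} - v_t) (R_{10} - R_{01})`. Finally `R_{01} ≤ R_{10}`: relabelling periods `t` and `t+1`
(which preserves the law of everything else) turns the `(0,1)` calendar into the `(1,0)` one, and
pathwise, selling at the high price before the low one never loses revenue, because
`S ↦ min b S` is concave.
-/

open MeasureTheory ProbabilityTheory

/-- Single-item revenue with inventory truncation: with initial inventory `b`, per-period prices
`P 0, …, P (T-1)` and demands `Q 0, …, Q (T-1)` (periods indexed from `0`), the revenue is
`Σ_t P t · (min b S_{t+1} − min b S_t)` where `S_t = Q 0 + ⋯ + Q (t-1)`. -/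
noncomputable def singleItemRev (b : ℝ) (T : ℕ) (P Q : ℕ → ℝ) : ℝ :=
  ∑ t ∈ Finset.range T,
    P t * (min b (∑ s ∈ Finset.range (t + 1), Q s) - min b (∑ s ∈ Finset.range t, Q s))

/-- Realized revenue of a randomized two-price calendar: the period-`t` price is
`A t · pH + (1 − A t) · pL` and the period-`t` demand is `A t · QH t + (1 − A t) · QL t`,
where `A t ∈ {0,1}` is the indicator that the high price is offered in period `t`. -/
noncomputable def twoPriceRev (b pH pL : ℝ) (T : ℕ) (A QH QL : ℕ → ℝ) : ℝ :=
  singleItemRev b T (fun t => A t * pH + (1 - A t) * pL)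
    (fun t => A t * QH t + (1 - A t) * QL t)

/-- A randomized two-price calendar over `T` periods: `(A_t)_{t<T}`, `(QH_t)_{t<T}`,
`(QL_t)_{t<T}` are jointly independent, `A t` is Bernoulli with success probability `v t`,
`QH t ∼ FH` and `QL t ∼ FL`. -/
def IsTwoPriceCalendar {Ω : Type*} [MeasurableSpace Ω] (μ : Measure Ω)
    (T : ℕ) (FH FL : Measure ℝ) (v : ℕ → ℝ) (A QH QL : ℕ → Ω → ℝ) : Prop :=
  iIndepFun (m := fun _ : Fin T × Fin 3 => inferInstance)
      (fun i : Fin T × Fin 3 =>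
        if i.2 = 0 then A i.1 else if i.2 = 1 then QH i.1 else QL i.1) μ ∧
    (∀ t, t < T → Measurable (A t) ∧ Measurable (QH t) ∧ Measurable (QL t)) ∧
    (∀ t, t < T → (∀ ω, A t ω = 0 ∨ A t ω = 1) ∧ μ {ω | A t ω = 1} = ENNReal.ofReal (v t)) ∧
    (∀ t, t < T → μ.map (QH t) = FH ∧ μ.map (QL t) = FL)

open Finset Measure Function unitInterval

section SingleItem

theorem min_add_add_le_min_add_min {b S x y : ℝ} (hx : 0 ≤ x) (hy : 0 ≤ y) :
    min b S + min b (S + x + y) ≤ min b (S + x) + min b (S + y) := by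
  simp only [min_def]
  split_ifs <;> linarith

theorem singleItemRev_congr (b : ℝ) (T : ℕ) {P Q P' Q' : ℕ → ℝ}
    (hP : ∀ s < T, P s = P' s) (hQ : ∀ s < T, Q s = Q' s) :
    singleItemRev b T P Q = singleItemRev b T P' Q' := by
  have hS : ∀ k ≤ T, ∑ i ∈ range k, Q i = ∑ i ∈ range k, Q' i := fun k hk =>
    sum_congr rfl fun i hi => hQ i ((mem_range.1 hi).trans_le hk)
  refine sum_congr rfl fun s hs => ?_
  have hs := mem_range.1 hs
  rw [hP s hs, hS (s + 1) hs, hS s hs.le]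

theorem abs_singleItemRev_le (b : ℝ) (T : ℕ) (P Q : ℕ → ℝ) :
    |singleItemRev b T P Q| ≤ ∑ s ∈ range T, |P s| * |Q s| := by
  refine (abs_sum_le_sum_abs _ _).trans (sum_le_sum fun s _ => ?_)
  rw [abs_mul, sum_range_succ]
  refine mul_le_mul_of_nonneg_left ((abs_min_sub_min_le_max _ _ _ _).trans ?_) (abs_nonneg _)
  simp

theorem sum_range_comp_swap (Q : ℕ → ℝ) {t k : ℕ} (hk : k ≠ t + 1) :
    ∑ i ∈ range k, Q (Equiv.swap t (t + 1) i) = ∑ i ∈ range k, Q i := by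
  rcases le_or_gt k t with hkt | hkt
  · refine sum_congr rfl fun i hi => ?_
    have := mem_range.1 hi
    rw [Equiv.swap_apply_of_ne_of_ne (by omega) (by omega)]
  · refine Equiv.Perm.sum_comp _ _ _ fun i hi => ?_
    rw [Set.mem_ofPred_eq, Equiv.swap_apply_ne_self_iff] at hi
    simp only [coe_range, Set.mem_Iio]
    omega

theorem singleItemRev_comp_swap_le (b : ℝ) {T t : ℕ} (ht : t + 1 < T) {P Q : ℕ → ℝ}
    (hQ : ∀ s, 0 ≤ Q s) (hP : P (t + 1) ≤ P t) :
    singleItemRev b T (P ∘ Equiv.swap t (t + 1)) (Q ∘ Equiv.swap t (t + 1))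
      ≤ singleItemRev b T P Q := by
  have hsub : ({t, t + 1} : Finset ℕ) ⊆ range T := by
    intro x hx
    simp only [mem_insert, mem_singleton] at hx
    simp only [mem_range]
    omega
  rw [← sub_nonneg, singleItemRev, singleItemRev, ← sum_sub_distrib,
    ← sum_subset hsub fun s _ hs => ?_, sum_pair (by omega)]
  · simp only [Function.comp_apply, sum_range_succ, sum_range_comp_swap Q (t := t) (k := t)
      (by omega), Equiv.swap_apply_left, Equiv.swap_apply_right]
    rw [add_right_comm _ (Q (t + 1)) (Q t)]
    have hconcave :=
      min_add_add_le_min_add_min (b := b) (S := ∑ i ∈ range t, Q i) (hQ t) (hQ (t + 1))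
    -- the difference is `(P t - P (t + 1))` times the concavity gap `hconcave` of `min b`
    nlinarith
  · simp only [mem_insert, mem_singleton, not_or] at hs
    simp only [Function.comp_apply, Equiv.swap_apply_of_ne_of_ne hs.1 hs.2,
      sum_range_comp_swap Q (t := t) (k := s) (by omega),
      sum_range_comp_swap Q (t := t) (k := s + 1) (by omega), sub_self]

theorem twoPriceRev_comp_swap_le (b : ℝ) {pH pL : ℝ} (hpHL : pL ≤ pH) {T t : ℕ}
    (ht : t + 1 < T) {A QH QL : ℕ → ℝ} (hA : ∀ s, A s ∈ Set.Icc 0 1) (hQH : ∀ s, 0 ≤ QH s)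
    (hQL : ∀ s, 0 ≤ QL s) (hAt : A t = 1) (hAt' : A (t + 1) = 0) :
    twoPriceRev b pH pL T (A ∘ Equiv.swap t (t + 1)) (QH ∘ Equiv.swap t (t + 1))
      (QL ∘ Equiv.swap t (t + 1)) ≤ twoPriceRev b pH pL T A QH QL := by
  have hdemand (s : ℕ) : 0 ≤ A s * QH s + (1 - A s) * QL s :=
    add_nonneg (mul_nonneg (hA s).1 (hQH s)) (mul_nonneg (sub_nonneg.2 (hA s).2) (hQL s))
  have hprice : A (t + 1) * pH + (1 - A (t + 1)) * pL ≤ A t * pH + (1 - A t) * pL := by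
    simpa [hAt, hAt'] using hpHL
  unfold twoPriceRev
  simpa only [Function.comp_def] using
    singleItemRev_comp_swap_le (P := fun s => A s * pH + (1 - A s) * pL) b ht hdemand hprice

end SingleItem

section ProductMeasure

variable {ι X : Type*} [Fintype ι] [MeasurableSpace X]

theorem MeasureTheory.Measure.map_pi_comp_perm (μ : ι → Measure X) [∀ i, SigmaFinite (μ i)]
    (e : Equiv.Perm ι) :
    (Measure.pi μ).map (fun x => x ∘ e) = Measure.pi fun i => μ (e i) := by
  refine (pi_eq fun s hs => ?_).symm
  have hpre : (fun x : ι → X => x ∘ e) ⁻¹' Set.univ.pi s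
      = Set.univ.pi fun j => s (e.symm j) := by
    ext x
    simp only [Set.mem_preimage, Set.mem_pi, Set.mem_univ, true_implies, Function.comp_apply]
    exact ⟨fun h j => by simpa using h (e.symm j), fun h i => by simpa using h (e i)⟩
  rw [map_apply (by fun_prop) (.univ_pi hs), hpre, pi_pi,
    ← Equiv.prod_comp e fun j => μ j (s (e.symm j))]
  simp

variable [DecidableEq ι]

instance sigmaFinite_update (μ : ι → Measure X) [∀ i, SigmaFinite (μ i)] (i : ι)
    (ν : Measure X) [SigmaFinite ν] (j : ι) : SigmaFinite (update μ i ν j) := by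
  rcases eq_or_ne j i with rfl | h
  · rwa [update_self]
  · rw [update_of_ne h]
    infer_instance

instance isFiniteMeasure_update (μ : ι → Measure X) [∀ i, IsFiniteMeasure (μ i)] (i : ι)
    (ν : Measure X) [IsFiniteMeasure ν] (j : ι) : IsFiniteMeasure (update μ i ν j) := by
  rcases eq_or_ne j i with rfl | h
  · rwa [update_self]
  · rw [update_of_ne h]
    infer_instance

theorem prod_update_apply (μ : ι → Measure X) (i : ι) (ν : Measure X) (s : ι → Set X) :
    ∏ j, update μ i ν j (s j) = ν (s i) * ∏ j ∈ univ.erase i, μ j (s j) := by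
  rw [← mul_prod_erase _ _ (mem_univ i), update_self]
  congr 1
  exact prod_congr rfl fun j hj => by rw [update_of_ne (ne_of_mem_erase hj)]

theorem MeasureTheory.Measure.pi_update_add (μ : ι → Measure X) [∀ i, SigmaFinite (μ i)]
    (i : ι) (ν₁ ν₂ : Measure X) [SigmaFinite ν₁] [SigmaFinite ν₂] :
    Measure.pi (update μ i (ν₁ + ν₂))
      = Measure.pi (update μ i ν₁) + Measure.pi (update μ i ν₂) := by
  refine pi_eq fun s _ => ?_
  rw [add_apply, pi_pi, pi_pi, prod_update_apply, prod_update_apply, prod_update_apply,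
    add_apply, add_mul]

theorem MeasureTheory.Measure.pi_update_smul (μ : ι → Measure X) [∀ i, SigmaFinite (μ i)]
    (i : ι) (c : NNReal) (ν : Measure X) [SigmaFinite ν] :
    Measure.pi (update μ i (c • ν)) = c • Measure.pi (update μ i ν) := by
  refine pi_eq fun s _ => ?_
  rw [smul_apply, pi_pi, prod_update_apply, prod_update_apply, smul_apply, smul_mul_assoc]

theorem MeasureTheory.Measure.pi_update_bernoulliMeasure (μ : ι → Measure X)
    [∀ i, SigmaFinite (μ i)] (i : ι) (x y : X) (p : I) :
    Measure.pi (update μ i Ber(x, y, p))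
      = toNNReal p • Measure.pi (update μ i (dirac x))
        + toNNReal (σ p) • Measure.pi (update μ i (dirac y)) := by
  rw [bernoulliMeasure_def, pi_update_add, pi_update_smul, pi_update_smul]

theorem integral_pi_update_bernoulliMeasure (μ : ι → Measure X) [∀ i, SigmaFinite (μ i)]
    (i : ι) (x y : X) (p : I) {g : (ι → X) → ℝ}
    (hx : Integrable g (Measure.pi (update μ i (dirac x))))
    (hy : Integrable g (Measure.pi (update μ i (dirac y)))) :
    ∫ z, g z ∂Measure.pi (update μ i Ber(x, y, p))
      = p * ∫ z, g z ∂Measure.pi (update μ i (dirac x))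
        + (1 - p) * ∫ z, g z ∂Measure.pi (update μ i (dirac y)) := by
  rw [pi_update_bernoulliMeasure, integral_add_measure hx.smul_measure_nnreal
    hy.smul_measure_nnreal, integral_smul_nnreal_measure, integral_smul_nnreal_measure]
  simp [NNReal.smul_def]

theorem integral_pi_update₂_bernoulliMeasure (μ : ι → Measure X) [∀ i, IsFiniteMeasure (μ i)]
    {i₀ i₁ : ι} (h : i₀ ≠ i₁) (x y : X) {g : (ι → X) → ℝ} (hg : Measurable g) {C : ℝ}
    (hC : ∀ z, |g z| ≤ C) (p q : I) :
    ∫ z, g z ∂Measure.pi (update (update μ i₀ Ber(x, y, p)) i₁ Ber(x, y, q))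
      = p * q * ∫ z, g z ∂Measure.pi (update (update μ i₀ (dirac x)) i₁ (dirac x))
        + p * (1 - q) * ∫ z, g z ∂Measure.pi (update (update μ i₀ (dirac x)) i₁ (dirac y))
        + (1 - p) * q * ∫ z, g z ∂Measure.pi (update (update μ i₀ (dirac y)) i₁ (dirac x))
        + (1 - p) * (1 - q)
          * ∫ z, g z ∂Measure.pi (update (update μ i₀ (dirac y)) i₁ (dirac y)) := by
  have hint (ν : Measure (ι → X)) [IsFiniteMeasure ν] : Integrable g ν :=
    .of_bound hg.aestronglyMeasurable C (.of_forall hC)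
  rw [integral_pi_update_bernoulliMeasure _ i₁ x y q (hint _) (hint _)]
  simp only [update_comm h]
  rw [integral_pi_update_bernoulliMeasure _ i₀ x y p (hint _) (hint _),
    integral_pi_update_bernoulliMeasure _ i₀ x y p (hint _) (hint _)]
  simp only [update_comm h.symm]
  ring

end ProductMeasure

theorem map_eq_bernoulliMeasure {Ω X : Type*} [MeasurableSpace Ω] [MeasurableSpace X]
    [MeasurableSingletonClass X] {μ : Measure Ω} [IsProbabilityMeasure μ] {Y : Ω → X}
    (hY : Measurable Y) {x y : X} (hxy : ∀ ω, Y ω = x ∨ Y ω = y) {p : I}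
    (hp : μ (Y ⁻¹' {x}) = ENNReal.ofReal p) :
    μ.map Y = Ber(x, y, p) := by
  classical
  replace hp : μ (Y ⁻¹' {x}) = toNNReal p := by
    rw [hp, ← coe_toNNReal p, ENNReal.ofReal_coe_nnreal]
  ext s hs
  rw [map_apply hY hs, bernoulliMeasure_apply p hs]
  split_ifs with hx hy hy
  · convert measure_univ (μ := μ)
    ext ω
    grind [hxy ω]
  · convert hp using 2
    ext ω
    grind [hxy ω]
  · convert prob_compl_eq_one_sub (μ := μ) (hY (measurableSet_singleton x)) using 1
    · congr 1
      ext ω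
      grind [hxy ω]
    · rw [hp, ← ENNReal.coe_one, ← toNNReal_add_toNNReal_symm p, ENNReal.coe_add,
        ENNReal.add_sub_cancel_left ENNReal.coe_ne_top]
  · convert measure_empty (μ := μ)
    ext ω
    grind [hxy ω]

section CanonicalCalendar

variable {T : ℕ}

/-- The canonical sample space of a calendar is `Fin T × Fin 3 → ℝ`, where `x (s, 0)`, `x (s, 1)`,
`x (s, 2)` stand for `A s`, `QH s`, `QL s`. Coordinates are clamped to `[0, 1]`, where they lie
almost surely, so that the revenue `calendarRev` is bounded and continuous. -/
noncomputable def calendarCoord (T : ℕ) (j : Fin 3) (x : Fin T × Fin 3 → ℝ) (s : ℕ) : ℝ :=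
  if h : s < T then Set.projIcc 0 1 zero_le_one (x (⟨s, h⟩, j)) else 0

noncomputable def calendarRev (b pH pL : ℝ) (T : ℕ) (x : Fin T × Fin 3 → ℝ) : ℝ :=
  twoPriceRev b pH pL T (calendarCoord T 0 x) (calendarCoord T 1 x) (calendarCoord T 2 x)

noncomputable def calendarLaw (T : ℕ) (FH FL : Measure ℝ) (v : ℕ → ℝ) (i : Fin T × Fin 3) :
    Measure ℝ :=
  if i.2 = 0 then Ber(1, 0, Set.projIcc 0 1 zero_le_one (v i.1)) else if i.2 = 1 then FH else FL

def swapPeriods (a c : Fin T) : Equiv.Perm (Fin T × Fin 3) :=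
  (Equiv.swap a c).prodCongr (Equiv.refl _)

theorem calendarCoord_mem (j : Fin 3) (x : Fin T × Fin 3 → ℝ) (s : ℕ) :
    calendarCoord T j x s ∈ Set.Icc 0 1 := by
  unfold calendarCoord
  split_ifs
  · exact Subtype.prop _
  · simp

theorem calendarCoord_of_mem {j : Fin 3} {x : Fin T × Fin 3 → ℝ} {s : ℕ} (hs : s < T)
    (hx : x (⟨s, hs⟩, j) ∈ Set.Icc 0 1) : calendarCoord T j x s = x (⟨s, hs⟩, j) := by
  rw [calendarCoord, dif_pos hs, Set.projIcc_of_mem _ hx]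

theorem calendarCoord_comp_swapPeriods (j : Fin 3) (x : Fin T × Fin 3 → ℝ) (a c : Fin T) :
    calendarCoord T j (x ∘ swapPeriods a c) = calendarCoord T j x ∘ Equiv.swap (a : ℕ) c := by
  funext s
  by_cases hs : s < T
  · have hval : Equiv.swap (a : ℕ) c s = Equiv.swap a c ⟨s, hs⟩ :=
      Fin.val_injective.swap_apply a c ⟨s, hs⟩
    simp only [calendarCoord, Function.comp_apply, dif_pos hs, hval, Fin.is_lt, dif_pos]
    rfl
  · rw [Function.comp_apply, Equiv.swap_apply_of_ne_of_ne (by omega) (by omega)]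
    simp only [calendarCoord, dif_neg hs]

theorem continuous_calendarRev (b pH pL : ℝ) (T : ℕ) : Continuous (calendarRev b pH pL T) := by
  have hcoord (j : Fin 3) (s : ℕ) :
      Continuous fun x : Fin T × Fin 3 → ℝ => calendarCoord T j x s := by
    unfold calendarCoord
    split_ifs <;> fun_prop
  unfold calendarRev twoPriceRev singleItemRev
  fun_prop

theorem abs_calendarRev_le (b pH pL : ℝ) (x : Fin T × Fin 3 → ℝ) :
    |calendarRev b pH pL T x| ≤ T * (|pH| + |pL|) := by
  calc |calendarRev b pH pL T x|
      ≤ ∑ s ∈ range T, |calendarCoord T 0 x s * pH + (1 - calendarCoord T 0 x s) * pL|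
          * |calendarCoord T 0 x s * calendarCoord T 1 x s
            + (1 - calendarCoord T 0 x s) * calendarCoord T 2 x s| :=
        abs_singleItemRev_le _ _ _ _
    _ ≤ ∑ _s ∈ range T, (|pH| + |pL|) := sum_le_sum fun s _ => ?_
    _ = T * (|pH| + |pL|) := by rw [sum_const, card_range, nsmul_eq_mul]
  obtain ⟨ha₀, ha₁⟩ := calendarCoord_mem 0 x s
  obtain ⟨hh₀, hh₁⟩ := calendarCoord_mem 1 x s
  obtain ⟨hl₀, hl₁⟩ := calendarCoord_mem 2 x s
  have hprice : |calendarCoord T 0 x s * pH + (1 - calendarCoord T 0 x s) * pL|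
      ≤ |pH| + |pL| := by
    refine (abs_add_le _ _).trans ?_
    rw [abs_mul, abs_mul, abs_of_nonneg ha₀, abs_of_nonneg (sub_nonneg.2 ha₁)]
    linarith [mul_le_of_le_one_left (abs_nonneg pH) ha₁,
      mul_le_of_le_one_left (abs_nonneg pL) (sub_le_self 1 ha₀)]
  have hdemand : |calendarCoord T 0 x s * calendarCoord T 1 x s
      + (1 - calendarCoord T 0 x s) * calendarCoord T 2 x s| ≤ 1 := by
    rw [abs_le]
    constructor <;> nlinarith
  simpa using mul_le_mul hprice hdemand (abs_nonneg _) (by positivity)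

theorem integrable_calendarRev (b pH pL : ℝ) (ν : Measure (Fin T × Fin 3 → ℝ))
    [IsFiniteMeasure ν] : Integrable (calendarRev b pH pL T) ν :=
  .of_bound (continuous_calendarRev b pH pL T).aestronglyMeasurable _
    (.of_forall (abs_calendarRev_le b pH pL))

theorem calendarRev_comp_swapPeriods_le (b : ℝ) {pH pL : ℝ} (hpHL : pL ≤ pH) {a c : Fin T}
    (hac : (c : ℕ) = a + 1) {x : Fin T × Fin 3 → ℝ} (ha : x (a, 0) = 1) (hc : x (c, 0) = 0) :
    calendarRev b pH pL T (x ∘ swapPeriods a c) ≤ calendarRev b pH pL T x := by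
  have hcoord_a : calendarCoord T 0 x a = 1 := by simp [calendarCoord, ha]
  have hcoord_c : calendarCoord T 0 x (a + 1) = 0 := by simp [calendarCoord, ← hac, hc]
  unfold calendarRev
  simp only [calendarCoord_comp_swapPeriods, hac]
  exact twoPriceRev_comp_swap_le b hpHL (hac ▸ c.is_lt) (calendarCoord_mem 0 x)
    (fun s => (calendarCoord_mem 1 x s).1) (fun s => (calendarCoord_mem 2 x s).1)
    hcoord_a hcoord_c

theorem update_update_swapPeriods {α : Type*} {a c : Fin T} (hac : a ≠ c)
    (m : Fin T × Fin 3 → α) (hm : ∀ j, j ≠ 0 → m (a, j) = m (c, j)) (ν₀ ν₁ : α) :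
    (fun i => update (update m (a, 0) ν₀) (c, 0) ν₁ (swapPeriods a c i))
      = update (update m (a, 0) ν₁) (c, 0) ν₀ := by
  funext ⟨d, j⟩
  simp only [swapPeriods, Equiv.prodCongr_apply, Equiv.coe_refl, Prod.map_apply, id_eq,
    update_apply, Prod.mk.injEq]
  by_cases hj : j = 0
  · subst hj
    rcases eq_or_ne d a with rfl | hda
    · simp [hac]
    rcases eq_or_ne d c with rfl | hdc
    · simp [hac]
    · simp [Equiv.swap_apply_of_ne_of_ne hda hdc, hda, hdc]
  · simp only [hj, and_false, if_false]
    rcases eq_or_ne d a with rfl | hda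
    · simp [hm j hj]
    rcases eq_or_ne d c with rfl | hdc
    · simp [hm j hj]
    · simp [Equiv.swap_apply_of_ne_of_ne hda hdc]

theorem integral_calendarRev_update_zero_one_le (b : ℝ) {pH pL : ℝ} (hpHL : pL ≤ pH)
    {a c : Fin T} (hac : (c : ℕ) = a + 1) (m : Fin T × Fin 3 → Measure ℝ)
    [∀ i, IsFiniteMeasure (m i)] (hm : ∀ j, j ≠ 0 → m (a, j) = m (c, j)) :
    ∫ x, calendarRev b pH pL T x
        ∂Measure.pi (update (update m (a, 0) (dirac 0)) (c, 0) (dirac 1))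
      ≤ ∫ x, calendarRev b pH pL T x
          ∂Measure.pi (update (update m (a, 0) (dirac 1)) (c, 0) (dirac 0)) := by
  set m₁₀ := update (update m (a, 0) (dirac 1)) (c, 0) (dirac 0)
  have hac' : a ≠ c := fun h => by simp [h] at hac
  have hperm : Measurable fun x : Fin T × Fin 3 → ℝ => x ∘ swapPeriods a c :=
    measurable_pi_lambda _ fun i => measurable_pi_apply _
  rw [← update_update_swapPeriods hac' m hm, ← map_pi_comp_perm, integral_map hperm.aemeasurable
    (continuous_calendarRev b pH pL T).aestronglyMeasurable]
  refine integral_mono_ae ((integrable_calendarRev b pH pL _).comp_measurable hperm)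
    (integrable_calendarRev b pH pL _) ?_
  have hdirac (i : Fin T × Fin 3) (r : ℝ) (hi : m₁₀ i = dirac r) :
      ∀ᵐ x ∂Measure.pi m₁₀, x i = r :=
    (tendsto_eval_ae_ae (μ := m₁₀)).eventually (p := (· = r)) <| by
      rw [hi, ae_dirac_eq]
      exact Filter.eventually_pure.2 rfl
  filter_upwards [hdirac (a, 0) 1 (by simp [m₁₀, hac']), hdirac (c, 0) 0 (by simp [m₁₀])]
    with x hxa hxc
  exact calendarRev_comp_swapPeriods_le b hpHL hac hxa hxc

variable {FH FL : Measure ℝ} {v : ℕ → ℝ}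

instance [IsProbabilityMeasure FH] [IsProbabilityMeasure FL] (i : Fin T × Fin 3) :
    IsProbabilityMeasure (calendarLaw T FH FL v i) := by
  unfold calendarLaw
  split_ifs <;> infer_instance

theorem calendarLaw_eq_update_update {w : ℕ → ℝ} {a c : Fin T}
    (hw : ∀ d : Fin T, d ≠ a → d ≠ c → w d = v d) :
    calendarLaw T FH FL w
      = update (update (calendarLaw T FH FL v) (a, 0)
          Ber(1, 0, Set.projIcc 0 1 zero_le_one (w a)))
          (c, 0) Ber(1, 0, Set.projIcc 0 1 zero_le_one (w c)) := by
  funext ⟨d, j⟩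
  simp only [calendarLaw, update_apply, Prod.mk.injEq]
  split_ifs <;> simp_all

theorem ae_mem_Icc_calendarLaw (hFH : FH (Set.Icc 0 1)ᶜ = 0) (hFL : FL (Set.Icc 0 1)ᶜ = 0)
    (i : Fin T × Fin 3) : ∀ᵐ y ∂calendarLaw T FH FL v i, y ∈ Set.Icc 0 1 := by
  unfold calendarLaw
  split_ifs
  · rw [ae_iff]
    exact bernoulliMeasure_apply_of_notMem_of_notMem _ measurableSet_Icc.compl (by simp)
      (by simp)
  · exact ae_iff.2 hFH
  · exact ae_iff.2 hFL

theorem IsTwoPriceCalendar.integral_twoPriceRev_eq {Ω : Type*} [MeasurableSpace Ω]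
    {μ : Measure Ω} [IsProbabilityMeasure μ] {A QH QL : ℕ → Ω → ℝ}
    (h : IsTwoPriceCalendar μ T FH FL v A QH QL) (hv : ∀ s < T, v s ∈ Set.Icc 0 1)
    (hFH : FH (Set.Icc 0 1)ᶜ = 0) (hFL : FL (Set.Icc 0 1)ᶜ = 0) (b pH pL : ℝ) :
    ∫ ω, twoPriceRev b pH pL T (fun s => A s ω) (fun s => QH s ω) (fun s => QL s ω) ∂μ
      = ∫ x, calendarRev b pH pL T x ∂Measure.pi (calendarLaw T FH FL v) := by
  obtain ⟨hind, hmeas, hA, hQ⟩ := h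
  set Y : Fin T × Fin 3 → Ω → ℝ := fun i =>
    if i.2 = 0 then A i.1 else if i.2 = 1 then QH i.1 else QL i.1
  have hYm (i : Fin T × Fin 3) : Measurable (Y i) := by
    obtain ⟨hAm, hQHm, hQLm⟩ := hmeas i.1 i.1.2
    simp only [Y]
    split_ifs <;> assumption
  have hlaw (i : Fin T × Fin 3) : μ.map (Y i) = calendarLaw T FH FL v i := by
    obtain ⟨d, j⟩ := i
    simp only [Y, calendarLaw]
    split_ifs
    · refine map_eq_bernoulliMeasure (hmeas d d.2).1 (fun ω => ((hA d d.2).1 ω).symm) ?_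
      rw [Set.projIcc_of_mem _ (hv d d.2)]
      exact (hA d d.2).2
    · exact (hQ d d.2).1
    · exact (hQ d d.2).2
  have hjoint : μ.map (fun ω i => Y i ω) = Measure.pi (calendarLaw T FH FL v) := by
    rw [hind.map_fun_eq_pi_map fun i => (hYm i).aemeasurable]
    simp only [hlaw]
  have hmem : ∀ᵐ ω ∂μ, ∀ i, Y i ω ∈ Set.Icc 0 1 :=
    ae_all_iff.2 fun i => ae_of_ae_map (hYm i).aemeasurable
      (hlaw i ▸ ae_mem_Icc_calendarLaw hFH hFL i)
  rw [← hjoint, integral_map (measurable_pi_lambda _ hYm).aemeasurable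
    (continuous_calendarRev b pH pL T).aestronglyMeasurable]
  refine integral_congr_ae (hmem.mono fun ω hω => singleItemRev_congr _ _ ?_ ?_)
  all_goals
    intro s hs
    have hcoord (j : Fin 3) : calendarCoord T j (fun i => Y i ω) s = Y (⟨s, hs⟩, j) ω :=
      calendarCoord_of_mem hs (hω _)
    simp [hcoord, Y]

end CanonicalCalendar

theorem stmt_12_general {Ω₁ Ω₂ : Type*} [MeasurableSpace Ω₁] [MeasurableSpace Ω₂]
    (μ₁ : Measure Ω₁) (μ₂ : Measure Ω₂) [IsProbabilityMeasure μ₁] [IsProbabilityMeasure μ₂]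
    (b : ℝ) (pH pL : ℝ) (hpHL : pL ≤ pH)
    (T : ℕ) (t : ℕ) (ht : t + 1 < T)
    (FH FL : Measure ℝ) [IsProbabilityMeasure FH] [IsProbabilityMeasure FL]
    (hFH : FH (Set.Icc (0 : ℝ) 1)ᶜ = 0) (hFL : FL (Set.Icc (0 : ℝ) 1)ᶜ = 0)
    (v : ℕ → ℝ) (hv : ∀ s, s < T → v s ∈ Set.Icc (0 : ℝ) 1) (hvt : v t < v (t + 1))
    (A QH QL : ℕ → Ω₁ → ℝ) (A' QH' QL' : ℕ → Ω₂ → ℝ)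
    (h₁ : IsTwoPriceCalendar μ₁ T FH FL v A QH QL)
    (h₂ : IsTwoPriceCalendar μ₂ T FH FL (fun s => v (Equiv.swap t (t + 1) s)) A' QH' QL') :
    ∫ ω, twoPriceRev b pH pL T (fun s => A s ω) (fun s => QH s ω) (fun s => QL s ω) ∂μ₁
      ≤ ∫ ω, twoPriceRev b pH pL T (fun s => A' s ω) (fun s => QH' s ω)
          (fun s => QL' s ω) ∂μ₂ := by
  set a : Fin T := ⟨t, by omega⟩
  set c : Fin T := ⟨t + 1, ht⟩
  have hv' (s : ℕ) (hs : s < T) : v (Equiv.swap t (t + 1) s) ∈ Set.Icc 0 1 :=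
    hv _ (by rw [Equiv.swap_apply_def]; split_ifs <;> omega)
  have hexp := integral_pi_update₂_bernoulliMeasure (calendarLaw T FH FL v)
    (by simp [a, c] : ((a, 0) : Fin T × Fin 3) ≠ (c, 0)) 1 0
    (continuous_calendarRev b pH pL T).measurable (abs_calendarRev_le b pH pL)
  have hR := integral_calendarRev_update_zero_one_le b hpHL (a := a) (c := c) rfl
    (calendarLaw T FH FL v) fun j hj => by simp [calendarLaw, hj]
  rw [h₁.integral_twoPriceRev_eq hv hFH hFL, h₂.integral_twoPriceRev_eq hv' hFH hFL,
    calendarLaw_eq_update_update (v := v) (a := a) (c := c) (fun _ _ _ => rfl),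
    calendarLaw_eq_update_update (v := v) (w := fun s => v (Equiv.swap t (t + 1) s)) (a := a)
      (c := c) fun d hda hdc => by
        rw [Equiv.swap_apply_of_ne_of_ne (Fin.val_ne_of_ne hda) (Fin.val_ne_of_ne hdc)],
    hexp, hexp]
  simp only [a, c, Equiv.swap_apply_left, Equiv.swap_apply_right,
    Set.projIcc_of_mem _ (hv t (by omega)), Set.projIcc_of_mem _ (hv (t + 1) ht)]
  nlinarith [mul_le_mul_of_nonneg_left hR (sub_nonneg.2 hvt.le)]

/-- in a randomized two-price calendar, if `v_t < v_{t+1}` for two consecutive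
periods, then exchanging the probabilities `v_t` and `v_{t+1}` does not decrease the expected
revenue.  Periods are indexed `0, …, T-1`, with exchanged positions `t` and `t+1`, `t+1 < T`. -/
theorem stmt_12 {Ω₁ Ω₂ : Type*} [MeasurableSpace Ω₁] [MeasurableSpace Ω₂]
    (μ₁ : Measure Ω₁) (μ₂ : Measure Ω₂) [IsProbabilityMeasure μ₁] [IsProbabilityMeasure μ₂]
    (b : ℝ) (hb : 0 ≤ b) (pH pL : ℝ) (hpL : 0 ≤ pL) (hpHL : pL ≤ pH)
    (T : ℕ) (hT : 0 < T) (t : ℕ) (ht : t + 1 < T)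
    (FH FL : Measure ℝ) [IsProbabilityMeasure FH] [IsProbabilityMeasure FL]
    (hFH : FH (Set.Icc (0 : ℝ) 1)ᶜ = 0) (hFL : FL (Set.Icc (0 : ℝ) 1)ᶜ = 0)
    (v : ℕ → ℝ) (hv : ∀ s, s < T → v s ∈ Set.Icc (0 : ℝ) 1) (hvt : v t < v (t + 1))
    (A QH QL : ℕ → Ω₁ → ℝ) (A' QH' QL' : ℕ → Ω₂ → ℝ)
    (h₁ : IsTwoPriceCalendar μ₁ T FH FL v A QH QL)
    (h₂ : IsTwoPriceCalendar μ₂ T FH FL (fun s => v (Equiv.swap t (t + 1) s)) A' QH' QL') :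
    ∫ ω, twoPriceRev b pH pL T (fun s => A s ω) (fun s => QH s ω) (fun s => QL s ω) ∂μ₁
      ≤ ∫ ω, twoPriceRev b pH pL T (fun s => A' s ω) (fun s => QH' s ω)
          (fun s => QL' s ω) ∂μ₂ :=
  stmt_12_general μ₁ μ₂ b pH pL hpHL T t ht FH FL hFH hFL v hv hvt A QH QL A' QH' QL' h₁ h₂
end

section
/- Single-item non-stationary pricing with large inventory. Let T and m be positive integers, b ≥ 6 a real number, δ = √(3·ln(b)/b), prices p_1, …, p_m > 0, mean demands q_{t,j} ∈ [0,1], and let x_{t,j} ≥ 0 be a DLP-N feasible solution with value r* = Σ_{t,j} p_j q_{t,j} x_{t,j}. On a common probability space, let (A_t)_{t≤T} and (Q_{t,j})_{t≤T, j≤m} be jointly independent, where A_t takes values in {0, 1, …, m} with P(A_t = j) = (1−δ)·x_{t,j} for j ∈ {1,…,m} and P(A_t = 0) = 1 − (1−δ)·Σ_j x_{t,j}, and where Q_{t,j} takes values in [0,1] with E[Q_{t,j}] = q_{t,j}. Set the period-t price to P_t = p_{A_t} (with p_0 = 0) and the period-t demand to D_t = Q_{t, A_t} (with Q_{t,0}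 = 0). Then E[Rev] ≥ (1 − 1/b)·(1 − δ)·r*. -/
/-!
Let `D t = Q t (A t) ∈ [0, 1]` be the demand met in period `t` and `Y t = ∑_{s ≠ t} D s`. If
`Y t ≤ b - 1`, the inventory cannot run out before period `t` is served, so pointwise
`Rev ≥ ∑ t, 1{Y t ≤ b - 1} · p (A t) · D t`. Period `t`'s data `(A t, Q t ·)` is independent of
the other periods, so the `t`-th term has expectation
`P(Y t ≤ b - 1) · (1 - δ) ∑_j p j q t j x t j`. Finally `E[Y t] ≤ (1 - δ) b`, and the
multiplicative Chernoff bound at `λ = log (1 + δ)` gives `P(Y t ≥ b - 1) ≤ 1 / b` for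
`δ = √(3 log b / b)`.
-/

open MeasureTheory ProbabilityTheory

/-- The combined family consisting of the price-index choices `A t` (values in `ℕ`) and of the
demands `Q t j` for `j ≤ m` (values in `ℝ`), used to express their joint independence. -/
def npCalFam {Ω : Type*} {T m : ℕ} (A : ℕ → Ω → ℕ) (Q : ℕ → ℕ → Ω → ℝ) :
    (i : Fin T ⊕ (Fin T × Fin (m + 1))) → Ω → Sum.elim (fun _ => ℕ) (fun _ => ℝ) i
  | Sum.inl t => A t
  | Sum.inr tj => Q tj.1 tj.2

/-- The measurable-space structures on the codomains of `npCalFam`. -/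
def npCalMS (T m : ℕ) :
    ∀ i : Fin T ⊕ (Fin T × Fin (m + 1)),
      MeasurableSpace (Sum.elim (fun _ => ℕ) (fun _ => ℝ) i)
  | Sum.inl _ => (inferInstance : MeasurableSpace ℕ)
  | Sum.inr _ => (inferInstance : MeasurableSpace ℝ)

namespace Real

theorem exp_mul_le_one_add_mul {x : ℝ} (hx : x ∈ Set.Icc (0 : ℝ) 1) (c : ℝ) :
    exp (c * x) ≤ 1 + x * (exp c - 1) := by
  have h := convexOn_exp.2 (Set.mem_univ 0) (Set.mem_univ c) (sub_nonneg.2 hx.2) hx.1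
    (sub_add_cancel 1 x)
  simp only [smul_eq_mul, mul_zero, zero_add, exp_zero, mul_one] at h
  rw [mul_comm]
  linarith

theorem sub_sq_div_two_le_log_one_add {x : ℝ} (hx : 0 ≤ x) : x - x ^ 2 / 2 ≤ log (1 + x) := by
  refine le_trans ?_ (le_log_one_add_of_nonneg hx)
  rw [le_div_iff₀ (by linarith)]
  nlinarith [pow_nonneg hx 3]

theorem three_mul_log_le_self {b : ℝ} (hb : 6 ≤ b) : 3 * log b ≤ b := by
  have hlog6 : log 6 < 2 := by
    rw [log_lt_iff_lt_exp (by norm_num), show (2 : ℝ) = 1 + 1 by norm_num, exp_add]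
    nlinarith [exp_one_gt_d9]
  have hlog : log b = log 6 + log (b / 6) := by
    rw [← log_mul (by norm_num) (by positivity), mul_div_cancel₀ b (by norm_num)]
  nlinarith [log_le_sub_one_of_pos (show 0 < b / 6 by positivity)]

theorem sqrt_three_mul_log_div_le_one {b : ℝ} (hb : 6 ≤ b) : √(3 * log b / b) ≤ 1 := by
  rw [sqrt_le_one, div_le_one (by linarith)]
  exact three_mul_log_le_self hb

/-- The exponent of the Chernoff bound at `t = log (1 + δ)`, threshold `b - 1` and mean
`(1 - δ) b`: the choice of `δ` makes it at most `-log b`. -/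
theorem chernoff_exponent_le {b δ : ℝ} (hb : 6 ≤ b) (hδ : δ = √(3 * log b / b)) :
    -log (1 + δ) * (b - 1) + δ * ((1 - δ) * b) ≤ -log b := by
  have hδ0 : 0 ≤ δ := hδ ▸ sqrt_nonneg _
  have hδsq : δ ^ 2 * b = 3 * log b := by
    rw [hδ, sq_sqrt (by positivity [log_nonneg (show (1 : ℝ) ≤ b by linarith)]),
      div_mul_cancel₀ _ (by positivity)]
  have hlogb : 1 ≤ log b := by
    rw [le_log_iff_exp_le (by linarith)]
    linarith [exp_one_lt_d9]
  have hlog1 := mul_le_mul_of_nonneg_right (sub_sq_div_two_le_log_one_add hδ0)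
    (show 0 ≤ b - 1 by linarith)
  nlinarith [sq_nonneg (δ - 1)]

end Real

namespace ProbabilityTheory

theorem mul_select_eq_sum_indicator {Ω : Type*} {A : Ω → ℕ} {Q : ℕ → Ω → ℝ} {m : ℕ} {ω : Ω}
    (h : A ω ≤ m) (w : ℕ → ℝ) :
    w (A ω) * Q (A ω) ω
      = ∑ j ∈ Finset.range (m + 1), {ω | A ω = j}.indicator (fun _ => w j) ω * Q j ω := by
  rw [Finset.sum_eq_single_of_mem (A ω) (Finset.mem_range.2 (Nat.lt_succ_of_le h))]
  · simp
  · intro j _ hj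
    simp [Ne.symm hj]

variable {Ω : Type*} [MeasurableSpace Ω] {μ : Measure Ω}

theorem iIndepFun.curry {ι κ β : Type*} [MeasurableSpace β] {X : ι → κ → Ω → β}
    (hX : ∀ i j, Measurable (X i j)) (h : iIndepFun (fun p : ι × κ => X p.1 p.2) μ) :
    iIndepFun (fun i ω j => X i j ω) μ := by
  have := h.isProbabilityMeasure
  have _ : ∀ i j, IsProbabilityMeasure (μ.map (X i j)) :=
    fun i j => Measure.isProbabilityMeasure_map (hX i j).aemeasurable
  have hrow (i : ι) : μ.map (fun ω j => X i j ω) = Measure.infinitePi fun j => μ.map (X i j) :=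
    (h.precomp (Prod.mk_right_injective i)).map_fun_eq_infinitePi_map (hX i)
  have hall : μ.map (fun ω (p : ι × κ) => X p.1 p.2 ω) =
      Measure.infinitePi fun p : ι × κ => μ.map (X p.1 p.2) :=
    h.map_fun_eq_infinitePi_map fun p => hX p.1 p.2
  rw [iIndepFun_iff_map_fun_eq_infinitePi_map (fun i => measurable_pi_lambda _ (hX i))]
  calc μ.map (fun ω i j => X i j ω)
      = (μ.map fun ω (p : ι × κ) => X p.1 p.2 ω).map (MeasurableEquiv.curry ι κ β) := by
        rw [Measure.map_map (by fun_prop) (by fun_prop)]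
        rfl
    _ = Measure.infinitePi fun i => Measure.infinitePi fun j => μ.map (X i j) := by
        rw [hall]
        exact Measure.infinitePi_map_curry fun i j => μ.map (X i j)
    _ = Measure.infinitePi fun i => μ.map (fun ω j => X i j ω) := by simp_rw [hrow]

theorem iIndepFun.indepFun_comp_finsetSum {ι β : Type*} [MeasurableSpace β] {B : ι → Ω → β}
    (h : iIndepFun B μ) (hB : ∀ i, Measurable (B i)) {f g : β → ℝ} (hf : Measurable f)
    (hg : Measurable g) {s : Finset ι} {i : ι} (hi : i ∉ s) :
    IndepFun (fun ω => f (B i ω)) (fun ω => ∑ j ∈ s, g (B j ω)) μ := by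
  have := (h.indepFun_finset {i} s (Finset.disjoint_singleton_left.2 hi) hB).comp
    (φ := fun v => f (v ⟨i, Finset.mem_singleton_self i⟩)) (ψ := fun v => ∑ j : s, g (v j))
    (by fun_prop) (by fun_prop)
  exact this.congr (.of_forall fun _ => rfl)
    (.of_forall fun ω => Finset.sum_coe_sort s fun j => g (B j ω))

theorem IndepFun.integral_indicator_preimage [IsFiniteMeasure μ] {β : Type*} [MeasurableSpace β]
    {W : Ω → ℝ} {Y : Ω → β} (h : IndepFun W Y μ) (hW : Integrable W μ) (hY : Measurable Y)
    {S : Set β} (hS : MeasurableSet S) :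
    ∫ ω, (Y ⁻¹' S).indicator W ω ∂μ = μ.real (Y ⁻¹' S) * ∫ ω, W ω ∂μ := by
  have hind : IndepFun W (fun ω => S.indicator (1 : β → ℝ) (Y ω)) μ :=
    h.comp measurable_id (measurable_one.indicator hS)
  have hprod : (Y ⁻¹' S).indicator W = fun ω => W ω * S.indicator 1 (Y ω) := by
    ext ω
    by_cases hω : Y ω ∈ S <;> simp [Set.indicator_of_mem, Set.indicator_of_notMem, hω]
  rw [hprod, hind.integral_fun_mul_eq_mul_integral hW.aestronglyMeasurable
    ((measurable_one.indicator hS).comp hY).aestronglyMeasurable, mul_comm]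
  congr 1
  rw [← integral_indicator_one (hY hS)]
  rfl

theorem measurable_mul_select {A : Ω → ℕ} {Q : ℕ → Ω → ℝ} {m : ℕ} (hA : Measurable A)
    (hAm : ∀ ω, A ω ≤ m) (hQ : ∀ j ≤ m, Measurable (Q j)) (w : ℕ → ℝ) :
    Measurable fun ω => w (A ω) * Q (A ω) ω := by
  simp_rw [mul_select_eq_sum_indicator (hAm _)]
  exact Finset.measurable_sum _ fun j hj => (measurable_const.indicator
    (hA (measurableSet_singleton j))).mul (hQ j (Nat.lt_succ_iff.1 (Finset.mem_range.1 hj)))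

theorem integral_mul_select [IsFiniteMeasure μ] {A : Ω → ℕ} {Q : ℕ → Ω → ℝ} {m : ℕ}
    (hA : Measurable A) (hAm : ∀ ω, A ω ≤ m) (hQ : ∀ j ≤ m, Integrable (Q j) μ)
    (hind : ∀ j ≤ m, IndepFun A (Q j) μ) (w : ℕ → ℝ) :
    ∫ ω, w (A ω) * Q (A ω) ω ∂μ
      = ∑ j ∈ Finset.range (m + 1), w j * μ.real {ω | A ω = j} * ∫ ω, Q j ω ∂μ := by
  have hmeas (j : ℕ) : MeasurableSet {ω | A ω = j} := hA (measurableSet_singleton j)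
  simp_rw [mul_select_eq_sum_indicator (hAm _)]
  rw [integral_finsetSum]
  · refine Finset.sum_congr rfl fun j hj => ?_
    have hjm := Nat.lt_succ_iff.1 (Finset.mem_range.1 hj)
    have hind' : IndepFun ({ω | A ω = j}.indicator fun _ => w j) (Q j) μ :=
      (hind j hjm).comp (φ := ({j} : Set ℕ).indicator fun _ => w j) (ψ := id)
        measurable_from_top measurable_id
    rw [hind'.integral_fun_mul_eq_mul_integral
      ((integrable_const _).indicator (hmeas j)).aestronglyMeasurable
      (hQ j hjm).aestronglyMeasurable, integral_indicator_const _ (hmeas j), smul_eq_mul,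
      mul_comm (μ.real _)]
  · intro j hj
    exact (hQ j (Nat.lt_succ_iff.1 (Finset.mem_range.1 hj))).bdd_mul
      ((integrable_const _).indicator (hmeas j)).aestronglyMeasurable
      (.of_forall fun ω => norm_indicator_le_norm_self _ ω)

theorem integral_mul_select_of_law [IsFiniteMeasure μ] {A : Ω → ℕ} {Q : ℕ → Ω → ℝ} {m : ℕ}
    {c : ℝ} {q x : ℕ → ℝ} (hA : Measurable A) (hAm : ∀ ω, A ω ≤ m)
    (hQ : ∀ j ≤ m, Integrable (Q j) μ) (hind : ∀ j ≤ m, IndepFun A (Q j) μ)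
    (hQ0 : ∀ ω, Q 0 ω = 0) (hc : 0 ≤ c) (hx : ∀ j ∈ Finset.Icc 1 m, 0 ≤ x j)
    (hAlaw : ∀ j ∈ Finset.Icc 1 m, μ {ω | A ω = j} = ENNReal.ofReal (c * x j))
    (hQmean : ∀ j ∈ Finset.Icc 1 m, ∫ ω, Q j ω ∂μ = q j) (w : ℕ → ℝ) :
    ∫ ω, w (A ω) * Q (A ω) ω ∂μ = c * ∑ j ∈ Finset.Icc 1 m, w j * q j * x j := by
  have hrange : Finset.range (m + 1) = insert 0 (Finset.Icc 1 m) := by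
    ext j; simp only [Finset.mem_range, Finset.mem_insert, Finset.mem_Icc]; omega
  rw [integral_mul_select hA hAm hQ hind, hrange, Finset.sum_insert (by simp), Finset.mul_sum]
  simp only [hQ0, integral_zero, mul_zero, zero_add]
  refine Finset.sum_congr rfl fun j hj => ?_
  rw [measureReal_def, hAlaw j hj, hQmean j hj, ENNReal.toReal_ofReal (mul_nonneg hc (hx j hj))]
  ring

theorem mgf_le_exp_mul_integral [IsProbabilityMeasure μ] {X : Ω → ℝ} (hX : Measurable X)
    (h01 : ∀ ω, X ω ∈ Set.Icc (0 : ℝ) 1) (t : ℝ) :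
    mgf X μ t ≤ Real.exp ((Real.exp t - 1) * ∫ ω, X ω ∂μ) := by
  have hXint : Integrable X μ := .of_mem_Icc 0 1 hX.aemeasurable (.of_forall h01)
  calc mgf X μ t ≤ ∫ ω, (1 + X ω * (Real.exp t - 1)) ∂μ :=
        integral_mono (integrable_exp_mul_of_mem_Icc hX.aemeasurable (.of_forall h01))
          ((integrable_const 1).add (hXint.mul_const _))
          fun ω => Real.exp_mul_le_one_add_mul (h01 ω) t
    _ = (Real.exp t - 1) * ∫ ω, X ω ∂μ + 1 := by
        rw [integral_add (integrable_const 1) (hXint.mul_const _), integral_mul_const]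
        simp only [integral_const, probReal_univ, smul_eq_mul, mul_one]
        ring
    _ ≤ Real.exp ((Real.exp t - 1) * ∫ ω, X ω ∂μ) := Real.add_one_le_exp _

theorem measureReal_sum_ge_le_exp {ι : Type*} {X : ι → Ω → ℝ} (hind : iIndepFun X μ)
    (hX : ∀ i, Measurable (X i)) (h01 : ∀ i ω, X i ω ∈ Set.Icc (0 : ℝ) 1) (s : Finset ι)
    (a : ℝ) {t : ℝ} (ht : 0 ≤ t) :
    μ.real {ω | a ≤ ∑ i ∈ s, X i ω}
      ≤ Real.exp (-t * a + (Real.exp t - 1) * ∑ i ∈ s, ∫ ω, X i ω ∂μ) := by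
  have := hind.isProbabilityMeasure
  have hsum : (fun ω => ∑ i ∈ s, X i ω) = ∑ i ∈ s, X i := by ext; simp
  have hsum01 : ∀ ω, ∑ i ∈ s, X i ω ∈ Set.Icc (0 : ℝ) s.card := fun ω =>
    ⟨Finset.sum_nonneg fun i _ => (h01 i ω).1,
      (Finset.sum_le_card_nsmul s _ 1 fun i _ => (h01 i ω).2).trans (by simp)⟩
  calc μ.real {ω | a ≤ ∑ i ∈ s, X i ω}
      ≤ Real.exp (-t * a) * mgf (fun ω => ∑ i ∈ s, X i ω) μ t :=
        measure_ge_le_exp_mul_mgf a ht (integrable_exp_mul_of_mem_Icc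
          (Finset.measurable_sum _ fun i _ => hX i).aemeasurable (.of_forall hsum01))
    _ = Real.exp (-t * a) * ∏ i ∈ s, mgf (X i) μ t := by rw [hsum, hind.mgf_sum hX]
    _ ≤ Real.exp (-t * a) * ∏ i ∈ s, Real.exp ((Real.exp t - 1) * ∫ ω, X i ω ∂μ) := by
        gcongr with i
        · exact fun i _ => mgf_nonneg
        · exact mgf_le_exp_mul_integral (hX i) (h01 i) t
    _ = _ := by rw [← Real.exp_sum, ← Real.exp_add, Finset.mul_sum]

theorem one_sub_inv_le_measureReal_sum_le {ι : Type*} [Fintype ι] {X : ι → Ω → ℝ}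
    (hind : iIndepFun X μ) (hX : ∀ i, Measurable (X i)) (h01 : ∀ i ω, X i ω ∈ Set.Icc (0 : ℝ) 1)
    {b δ : ℝ} (hb : 6 ≤ b) (hδ : δ = √(3 * Real.log b / b))
    (hmean : ∑ i, ∫ ω, X i ω ∂μ ≤ (1 - δ) * b) (s : Finset ι) :
    1 - 1 / b ≤ μ.real {ω | ∑ i ∈ s, X i ω ≤ b - 1} := by
  have := hind.isProbabilityMeasure
  have hδ0 : 0 ≤ δ := hδ ▸ Real.sqrt_nonneg _
  have hb0 : 0 < b := by linarith
  have hmean_s : ∑ i ∈ s, ∫ ω, X i ω ∂μ ≤ (1 - δ) * b :=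
    (Finset.sum_le_sum_of_subset_of_nonneg (Finset.subset_univ s)
      fun i _ _ => integral_nonneg fun ω => (h01 i ω).1).trans hmean
  have htail : μ.real {ω | b - 1 ≤ ∑ i ∈ s, X i ω} ≤ 1 / b := by
    have h := measureReal_sum_ge_le_exp hind hX h01 s (b - 1)
      (Real.log_nonneg (le_add_of_nonneg_right hδ0))
    rw [Real.exp_log (by linarith), add_sub_cancel_left] at h
    calc _ ≤ _ := h
      _ ≤ Real.exp (-Real.log b) := Real.exp_le_exp.2 <| le_trans (by gcongr)
          (Real.chernoff_exponent_le hb hδ)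
      _ = 1 / b := by rw [Real.exp_neg, Real.exp_log hb0, one_div]
  have hmeas : MeasurableSet {ω | b - 1 < ∑ i ∈ s, X i ω} :=
    measurableSet_lt measurable_const (Finset.measurable_sum _ fun i _ => hX i)
  have hcompl : {ω | b - 1 < ∑ i ∈ s, X i ω}ᶜ = {ω | ∑ i ∈ s, X i ω ≤ b - 1} := by
    ext ω; simp
  rw [← hcompl, probReal_compl_eq_one_sub hmeas]
  have hsub : {ω | b - 1 < ∑ i ∈ s, X i ω} ⊆ {ω | b - 1 ≤ ∑ i ∈ s, X i ω} :=
    Set.ofPred_subset_ofPred.2 fun _ => le_of_lt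
  linarith [measureReal_mono (μ := μ) hsub]

end ProbabilityTheory

section Revenue

variable {b : ℝ} {T : ℕ}

theorem abs_singleItemRev_le_s17 {P D : ℕ → ℝ} (hD : ∀ t < T, D t ∈ Set.Icc (0 : ℝ) 1) :
    |singleItemRev b T P D| ≤ ∑ t ∈ Finset.range T, |P t| := by
  refine (Finset.abs_sum_le_sum_abs _ _).trans (Finset.sum_le_sum fun t ht => ?_)
  have hDt := hD t (Finset.mem_range.1 ht)
  have hincr :
      |min b (∑ s ∈ Finset.range (t + 1), D s) - min b (∑ s ∈ Finset.range t, D s)| ≤ 1 := by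
    refine (abs_min_sub_min_le_max _ _ _ _).trans ?_
    rw [Finset.sum_range_succ, add_sub_cancel_left, sub_self, abs_zero, abs_of_nonneg hDt.1]
    exact max_le zero_le_one hDt.2
  rw [abs_mul]
  exact mul_le_of_le_one_right (abs_nonneg _) hincr

/-- If the other periods' total demand is at most `b - 1`, period `t` sells its whole demand. -/
theorem sum_ite_le_singleItemRev {P D : ℕ → ℝ} (hP : ∀ t < T, 0 ≤ P t)
    (hD : ∀ t < T, D t ∈ Set.Icc (0 : ℝ) 1) :
    ∑ t : Fin T, (if ∑ u ∈ Finset.univ.erase t, D u ≤ b - 1 then P t * D t else 0)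
      ≤ singleItemRev b T P D := by
  rw [singleItemRev, ← Fin.sum_univ_eq_sum_range]
  refine Finset.sum_le_sum fun t _ => ?_
  have hDt := hD t t.isLt
  have hstep : ∑ s ∈ Finset.range (t + 1), D s = ∑ s ∈ Finset.range t, D s + D t :=
    Finset.sum_range_succ _ _
  have hmono : ∑ s ∈ Finset.range t, D s ≤ ∑ s ∈ Finset.range (t + 1), D s := by
    linarith [hDt.1]
  split_ifs with hroom
  · have hprefix : ∑ s ∈ Finset.range (t + 1), D s ≤ ∑ s ∈ Finset.range T, D s :=
      Finset.sum_le_sum_of_subset_of_nonneg (Finset.range_subset_range.2 t.isLt)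
        fun s hs _ => (hD s (Finset.mem_range.1 hs)).1
    rw [Finset.sum_erase_eq_sub (Finset.mem_univ t), Fin.sum_univ_eq_sum_range D] at hroom
    have hle : ∑ s ∈ Finset.range (t + 1), D s ≤ b := by linarith [hDt.2]
    rw [min_eq_right hle, min_eq_right (hmono.trans hle), hstep, add_sub_cancel_left]
  · exact mul_nonneg (hP t t.isLt) (sub_nonneg.2 (min_le_min_left b hmono))

theorem integrable_singleItemRev {Ω : Type*} [MeasurableSpace Ω] {μ : Measure Ω}
    [IsFiniteMeasure μ] {P D : ℕ → Ω → ℝ} {C : ℝ} (hPm : ∀ t < T, Measurable (P t))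
    (hPC : ∀ t < T, ∀ ω, |P t ω| ≤ C) (hDm : ∀ t < T, Measurable (D t))
    (hD : ∀ t < T, ∀ ω, D t ω ∈ Set.Icc (0 : ℝ) 1) :
    Integrable (fun ω => singleItemRev b T (fun t => P t ω) (fun t => D t ω)) μ := by
  refine .of_bound ?_ (T * C) (.of_forall fun ω => ?_)
  · refine (Finset.measurable_sum _ fun t ht => ?_).aestronglyMeasurable
    have hsum (n : ℕ) (hn : n ≤ T) : Measurable fun ω => ∑ s ∈ Finset.range n, D s ω :=
      Finset.measurable_sum _ fun s hs => hDm s (by grind)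
    have htT := Finset.mem_range.1 ht
    exact (hPm t htT).mul
      ((measurable_const.min (hsum (t + 1) htT)).sub (measurable_const.min (hsum t htT.le)))
  · calc ‖singleItemRev b T (fun t => P t ω) (fun t => D t ω)‖
        ≤ ∑ t ∈ Finset.range T, |P t ω| := abs_singleItemRev_le_s17 fun t ht => hD t ht ω
      _ ≤ ∑ _t ∈ Finset.range T, C :=
          Finset.sum_le_sum fun t ht => hPC t (Finset.mem_range.1 ht) ω
      _ = T * C := by simp

theorem one_sub_mul_sum_integral_le_integral_singleItemRev {Ω : Type*} [MeasurableSpace Ω]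
    {μ : Measure Ω} [IsFiniteMeasure μ] {P D : ℕ → Ω → ℝ} {C ε : ℝ}
    (hPm : ∀ t < T, Measurable (P t)) (hPC : ∀ t < T, ∀ ω, |P t ω| ≤ C)
    (hP : ∀ t < T, ∀ ω, 0 ≤ P t ω) (hDm : ∀ t < T, Measurable (D t))
    (hD : ∀ t < T, ∀ ω, D t ω ∈ Set.Icc (0 : ℝ) 1)
    (hind : ∀ t : Fin T, IndepFun (fun ω => P t ω * D t ω)
      (fun ω => ∑ u ∈ Finset.univ.erase t, D u ω) μ)
    (hroom : ∀ t : Fin T, 1 - ε ≤ μ.real {ω | ∑ u ∈ Finset.univ.erase t, D u ω ≤ b - 1}) :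
    (1 - ε) * ∑ t : Fin T, ∫ ω, P t ω * D t ω ∂μ
      ≤ ∫ ω, singleItemRev b T (fun t => P t ω) (fun t => D t ω) ∂μ := by
  set room : Fin T → Set Ω := fun t => {ω | ∑ u ∈ Finset.univ.erase t, D u ω ≤ b - 1}
  have hYm (t : Fin T) : Measurable fun ω => ∑ u ∈ Finset.univ.erase t, D u ω :=
    Finset.measurable_sum _ fun u _ => hDm u u.isLt
  have hint (t : Fin T) : Integrable (fun ω => P t ω * D t ω) μ :=
    (Integrable.of_mem_Icc 0 1 (hDm t t.isLt).aemeasurable (.of_forall (hD t t.isLt))).bdd_mul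
      (hPm t t.isLt).aestronglyMeasurable (.of_forall (hPC t t.isLt))
  have hint_room (t : Fin T) : Integrable ((room t).indicator fun ω => P t ω * D t ω) μ :=
    (hint t).indicator (measurableSet_le (hYm t) measurable_const)
  calc (1 - ε) * ∑ t : Fin T, ∫ ω, P t ω * D t ω ∂μ
      ≤ ∑ t : Fin T, μ.real (room t) * ∫ ω, P t ω * D t ω ∂μ := by
        rw [Finset.mul_sum]
        exact Finset.sum_le_sum fun t _ => mul_le_mul_of_nonneg_right (hroom t)
          (integral_nonneg fun ω => mul_nonneg (hP t t.isLt ω) (hD t t.isLt ω).1)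
    _ = ∫ ω, ∑ t : Fin T, (room t).indicator (fun ω => P t ω * D t ω) ω ∂μ := by
        rw [integral_finsetSum _ fun t _ => hint_room t]
        exact Finset.sum_congr rfl fun t _ =>
          ((hind t).integral_indicator_preimage (hint t) (hYm t) measurableSet_Iic).symm
    _ ≤ ∫ ω, singleItemRev b T (fun t => P t ω) (fun t => D t ω) ∂μ := by
        refine integral_mono (integrable_finsetSum _ fun t _ => hint_room t)
          (integrable_singleItemRev hPm hPC hDm hD) fun ω => ?_
        refine le_of_eq_of_le (Finset.sum_congr rfl fun t _ => ?_)
          (sum_ite_le_singleItemRev (fun t ht => hP t ht ω) fun t ht => hD t ht ω)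
        simp only [room, Set.indicator_apply, Set.mem_ofPred_eq]

end Revenue

section Model

variable {Ω : Type*} {T : ℕ} (m : ℕ)

/-- Period `t`'s data as one real vector, so that `iIndepFun.curry` can regroup the jointly
independent family `npCalFam A Q` period by period. -/
def periodBlock (A : ℕ → Ω → ℕ) (Q : ℕ → ℕ → Ω → ℝ) (t : ℕ) (ω : Ω) :
    Option (Fin (m + 1)) → ℝ
  | none => A t ω
  | some j => Q t j ω

noncomputable def weightedDemand (w : ℕ → ℝ) (v : Option (Fin (m + 1)) → ℝ) : ℝ :=
  ∑ j : Fin (m + 1), if v none = j then w j * v (some j) else 0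

variable {m}

theorem measurable_weightedDemand (w : ℕ → ℝ) : Measurable (weightedDemand m w) := by
  refine Finset.measurable_sum _ fun j _ => Measurable.ite ?_ (by fun_prop) measurable_const
  exact measurableSet_eq_fun (measurable_pi_apply none) measurable_const

theorem weightedDemand_periodBlock {A : ℕ → Ω → ℕ} {Q : ℕ → ℕ → Ω → ℝ} {t : ℕ} {ω : Ω}
    (h : A t ω ≤ m) (w : ℕ → ℝ) :
    weightedDemand m w (periodBlock m A Q t ω) = w (A t ω) * Q t (A t ω) ω := by
  simp only [weightedDemand, periodBlock, Nat.cast_inj]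
  rw [Fin.sum_univ_eq_sum_range (fun j => if A t ω = j then w j * Q t j ω else 0),
    Finset.sum_ite_eq, if_pos (Finset.mem_range.2 (Nat.lt_succ_of_le h))]

variable [MeasurableSpace Ω] {μ : Measure Ω}

theorem measurable_periodBlock_apply {A : ℕ → Ω → ℕ} {Q : ℕ → ℕ → Ω → ℝ}
    (hAmeas : ∀ t, t < T → Measurable (A t))
    (hQmeas : ∀ t, t < T → ∀ j, j ≤ m → Measurable (Q t j)) (t : Fin T)
    (k : Option (Fin (m + 1))) :
    Measurable fun ω => periodBlock m A Q t ω k := by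
  rcases k with _ | j
  · exact (measurable_from_top (f := ((↑) : ℕ → ℝ))).comp (hAmeas t t.isLt)
  · exact hQmeas t t.isLt j (Nat.lt_succ_iff.1 j.isLt)

theorem iIndepFun_periodBlock {A : ℕ → Ω → ℕ} {Q : ℕ → ℕ → Ω → ℝ}
    (hindep : iIndepFun (m := npCalMS T m) (npCalFam A Q) μ)
    (hAmeas : ∀ t, t < T → Measurable (A t))
    (hQmeas : ∀ t, t < T → ∀ j, j ≤ m → Measurable (Q t j)) :
    iIndepFun (fun t : Fin T => periodBlock m A Q t) μ := by
  let asReal : ∀ i : Fin T ⊕ (Fin T × Fin (m + 1)), Sum.elim (fun _ => ℕ) (fun _ => ℝ) i → ℝ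
    | Sum.inl _ => fun n : ℕ => (n : ℝ)
    | Sum.inr _ => id
  have hreal := hindep.comp (mγ := fun _ => Real.measurableSpace) asReal fun i => by
    cases i with
    | inl _ => exact measurable_from_top
    | inr _ => exact measurable_id
  let e : Fin T × Option (Fin (m + 1)) → Fin T ⊕ (Fin T × Fin (m + 1))
    | (t, none) => Sum.inl t
    | (t, some j) => Sum.inr (t, j)
  have he : e.Injective := by
    rintro ⟨t, _ | j⟩ ⟨t', _ | j'⟩ h <;> simp_all [e]
  refine iIndepFun.curry (measurable_periodBlock_apply hAmeas hQmeas) ?_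
  convert hreal.precomp he using 2 with p
  rcases p with ⟨t, _ | j⟩ <;> rfl

theorem iIndepFun_selectedDemand {A : ℕ → Ω → ℕ} {Q : ℕ → ℕ → Ω → ℝ}
    (hindep : iIndepFun (m := npCalMS T m) (npCalFam A Q) μ)
    (hAmeas : ∀ t, t < T → Measurable (A t))
    (hQmeas : ∀ t, t < T → ∀ j, j ≤ m → Measurable (Q t j))
    (hArange : ∀ t, t < T → ∀ ω, A t ω ≤ m) :
    iIndepFun (fun (t : Fin T) ω => Q t (A t ω) ω) μ := by
  convert (iIndepFun_periodBlock hindep hAmeas hQmeas).comp (fun _ => weightedDemand m 1)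
    (fun _ => measurable_weightedDemand 1) using 2 with t
  ext ω
  simp [weightedDemand_periodBlock (hArange t t.isLt ω)]

theorem indepFun_mul_selectedDemand_sum_erase {A : ℕ → Ω → ℕ} {Q : ℕ → ℕ → Ω → ℝ}
    (hindep : iIndepFun (m := npCalMS T m) (npCalFam A Q) μ)
    (hAmeas : ∀ t, t < T → Measurable (A t))
    (hQmeas : ∀ t, t < T → ∀ j, j ≤ m → Measurable (Q t j))
    (hArange : ∀ t, t < T → ∀ ω, A t ω ≤ m) (w : ℕ → ℝ) (t : Fin T) :
    IndepFun (fun ω => w (A t ω) * Q t (A t ω) ω)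
      (fun ω => ∑ u ∈ Finset.univ.erase t, Q u (A u ω) ω) μ := by
  have hsel (w : ℕ → ℝ) (u : Fin T) (ω : Ω) :
      weightedDemand m w (periodBlock m A Q u ω) = w (A u ω) * Q u (A u ω) ω :=
    weightedDemand_periodBlock (hArange u u.isLt ω) w
  simpa only [hsel, Pi.one_apply, one_mul] using
    (iIndepFun_periodBlock hindep hAmeas hQmeas).indepFun_comp_finsetSum
      (fun u => measurable_pi_lambda _ (measurable_periodBlock_apply hAmeas hQmeas u))
      (measurable_weightedDemand w) (measurable_weightedDemand 1) (Finset.notMem_erase t _)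

end Model

theorem stmt_17_general {Ω : Type*} [MeasurableSpace Ω] (μ : Measure Ω) [IsProbabilityMeasure μ]
    (T m : ℕ) (b : ℝ) (hb : 6 ≤ b)
    (δ : ℝ) (hδ : δ = Real.sqrt (3 * Real.log b / b))
    (p : ℕ → ℝ) (hp : ∀ j ∈ Finset.Icc 1 m, 0 < p j) (hp0 : p 0 = 0)
    (q : ℕ → ℕ → ℝ)
    (x : ℕ → ℕ → ℝ) (hx : ∀ t, t < T → ∀ j ∈ Finset.Icc 1 m, 0 ≤ x t j)
    (hxinv : ∑ t ∈ Finset.range T, ∑ j ∈ Finset.Icc 1 m, q t j * x t j ≤ b)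
    (r : ℝ) (hr : r = ∑ t ∈ Finset.range T, ∑ j ∈ Finset.Icc 1 m, p j * q t j * x t j)
    (A : ℕ → Ω → ℕ) (Q : ℕ → ℕ → Ω → ℝ)
    (hAmeas : ∀ t, t < T → Measurable (A t))
    (hQmeas : ∀ t, t < T → ∀ j, j ≤ m → Measurable (Q t j))
    (hindep : iIndepFun (m := npCalMS T m) (npCalFam A Q) μ)
    (hArange : ∀ t, t < T → ∀ ω, A t ω ≤ m)
    (hAdist : ∀ t, t < T → ∀ j ∈ Finset.Icc 1 m,
      μ {ω | A t ω = j} = ENNReal.ofReal ((1 - δ) * x t j))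
    (hQrange : ∀ t, t < T → ∀ j, j ≤ m → ∀ ω, Q t j ω ∈ Set.Icc (0 : ℝ) 1)
    (hQmean : ∀ t, t < T → ∀ j ∈ Finset.Icc 1 m, ∫ ω, Q t j ω ∂μ = q t j)
    (hQ0 : ∀ t, t < T → ∀ ω, Q t 0 ω = 0) :
    (1 - 1 / b) * (1 - δ) * r
      ≤ ∫ ω, singleItemRev b T (fun t => p (A t ω)) (fun t => Q t (A t ω) ω) ∂μ := by
  have hδ1 : δ ≤ 1 := hδ ▸ Real.sqrt_three_mul_log_div_le_one hb
  set D : ℕ → Ω → ℝ := fun t ω => Q t (A t ω) ω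
  have hD (t : ℕ) (ht : t < T) (ω : Ω) : D t ω ∈ Set.Icc (0 : ℝ) 1 :=
    hQrange t ht _ (hArange t ht ω) ω
  have hDm (t : ℕ) (ht : t < T) : Measurable (D t) := by
    simpa using measurable_mul_select (hAmeas t ht) (hArange t ht) (hQmeas t ht) 1
  have hPm (t : ℕ) (ht : t < T) : Measurable fun ω => p (A t ω) :=
    measurable_from_top.comp (hAmeas t ht)
  have hPC (t : ℕ) (ht : t < T) (ω : Ω) : |p (A t ω)| ≤ ∑ j ∈ Finset.range (m + 1), |p j| :=
    Finset.single_le_sum (f := fun j => |p j|) (fun j _ => abs_nonneg _)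
      (Finset.mem_range.2 (Nat.lt_succ_of_le (hArange t ht ω)))
  have hP (t : ℕ) (ht : t < T) (ω : Ω) : 0 ≤ p (A t ω) := by
    rcases (A t ω).eq_zero_or_pos with h0 | hpos
    · exact h0 ▸ hp0.ge
    · exact (hp _ (Finset.mem_Icc.2 ⟨hpos, hArange t ht ω⟩)).le
  have hmean (w : ℕ → ℝ) (t : Fin T) :
      ∫ ω, w (A t ω) * D t ω ∂μ = (1 - δ) * ∑ j ∈ Finset.Icc 1 m, w j * q t j * x t j :=
    integral_mul_select_of_law (hAmeas t t.isLt) (hArange t t.isLt)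
      (fun j hj => .of_mem_Icc 0 1 (hQmeas t t.isLt j hj).aemeasurable
        (.of_forall (hQrange t t.isLt j hj)))
      (fun j hj => hindep.indepFun (i := .inl t) (j := .inr (t, ⟨j, Nat.lt_succ_of_le hj⟩))
        (by simp))
      (hQ0 t t.isLt) (sub_nonneg.2 hδ1) (hx t t.isLt) (hAdist t t.isLt) (hQmean t t.isLt) w
  have hsum : ∑ u : Fin T, ∫ ω, D u ω ∂μ ≤ (1 - δ) * b :=
    calc ∑ u : Fin T, ∫ ω, D u ω ∂μ
        = (1 - δ) * ∑ u : Fin T, ∑ j ∈ Finset.Icc 1 m, q u j * x u j := by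
          rw [Finset.mul_sum]
          exact Finset.sum_congr rfl fun u _ => by simpa using hmean 1 u
      _ ≤ (1 - δ) * b := by
          rw [Fin.sum_univ_eq_sum_range (fun u => ∑ j ∈ Finset.Icc 1 m, q u j * x u j)]
          exact mul_le_mul_of_nonneg_left hxinv (sub_nonneg.2 hδ1)
  calc (1 - 1 / b) * (1 - δ) * r
      = (1 - 1 / b) * ∑ t : Fin T, ∫ ω, p (A t ω) * D t ω ∂μ := by
        rw [hr, ← Fin.sum_univ_eq_sum_range (fun t => ∑ j ∈ Finset.Icc 1 m, p j * q t j * x t j)]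
        simp only [hmean p, ← Finset.mul_sum, mul_assoc]
    _ ≤ _ := one_sub_mul_sum_integral_le_integral_singleItemRev hPm hPC hP hDm hD
        (indepFun_mul_selectedDemand_sum_erase hindep hAmeas hQmeas hArange p)
        (one_sub_inv_le_measureReal_sum_le (iIndepFun_selectedDemand hindep hAmeas hQmeas hArange)
          (fun u => hDm u u.isLt) (fun u => hD u u.isLt) hb hδ hsum <| Finset.univ.erase ·)

/-- single-item non-stationary pricing with large inventory `b ≥ 6` and
`δ = √(3·ln b / b)`.  In each period an index `A t ∈ {0,1,…,m}` is drawn with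
`P(A t = j) = (1−δ)·x_{t,j}` for `j ∈ {1,…,m}` and `A t = 0` (offering nothing, price `p_0 = 0`
and demand `Q_{t,0} = 0`) with the remaining probability; the price is `p (A t)` and the demand
is `Q t (A t)`.  Then the expected revenue is at least `(1 − 1/b)·(1 − δ)·r*`. -/
theorem stmt_17 {Ω : Type*} [MeasurableSpace Ω] (μ : Measure Ω) [IsProbabilityMeasure μ]
    (T m : ℕ) (hT : 0 < T) (hm : 0 < m) (b : ℝ) (hb : 6 ≤ b)
    (δ : ℝ) (hδ : δ = Real.sqrt (3 * Real.log b / b))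
    (p : ℕ → ℝ) (hp : ∀ j ∈ Finset.Icc 1 m, 0 < p j) (hp0 : p 0 = 0)
    (q : ℕ → ℕ → ℝ) (hq : ∀ t, t < T → ∀ j ∈ Finset.Icc 1 m, q t j ∈ Set.Icc (0 : ℝ) 1)
    (x : ℕ → ℕ → ℝ) (hx : ∀ t, t < T → ∀ j ∈ Finset.Icc 1 m, 0 ≤ x t j)
    (hxfeas : ∀ t, t < T → ∑ j ∈ Finset.Icc 1 m, x t j ≤ 1)
    (hxinv : ∑ t ∈ Finset.range T, ∑ j ∈ Finset.Icc 1 m, q t j * x t j ≤ b)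
    (r : ℝ) (hr : r = ∑ t ∈ Finset.range T, ∑ j ∈ Finset.Icc 1 m, p j * q t j * x t j)
    (A : ℕ → Ω → ℕ) (Q : ℕ → ℕ → Ω → ℝ)
    (hAmeas : ∀ t, t < T → Measurable (A t))
    (hQmeas : ∀ t, t < T → ∀ j, j ≤ m → Measurable (Q t j))
    (hindep : iIndepFun (m := npCalMS T m) (npCalFam A Q) μ)
    (hArange : ∀ t, t < T → ∀ ω, A t ω ≤ m)
    (hAdist : ∀ t, t < T → ∀ j ∈ Finset.Icc 1 m,
      μ {ω | A t ω = j} = ENNReal.ofReal ((1 - δ) * x t j))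
    (hA0 : ∀ t, t < T →
      μ {ω | A t ω = 0} = ENNReal.ofReal (1 - (1 - δ) * ∑ j ∈ Finset.Icc 1 m, x t j))
    (hQrange : ∀ t, t < T → ∀ j, j ≤ m → ∀ ω, Q t j ω ∈ Set.Icc (0 : ℝ) 1)
    (hQmean : ∀ t, t < T → ∀ j ∈ Finset.Icc 1 m, ∫ ω, Q t j ω ∂μ = q t j)
    (hQ0 : ∀ t, t < T → ∀ ω, Q t 0 ω = 0) :
    (1 - 1 / b) * (1 - δ) * r
      ≤ ∫ ω, singleItemRev b T (fun t => p (A t ω)) (fun t => Q t (A t ω) ω) ∂μ :=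
  stmt_17_general μ T m b hb δ hδ p hp hp0 q x hx hxinv r hr A Q hAmeas hQmeas hindep hArange hAdist
    hQrange hQmean hQ0
end
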